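/- For positive integers d and r, the signed polysymmetric elementary function has the power-sum expansion E_{d^r} = Σ_{τ ⊩ d} (−1)^{ℓ(τ)} p^⊗_{τ^r} / z^⊗_τ, where ℓ(τ) is the number of distinct blocks (counted with multiplicity) of the type τ. -/

import Mathlib

open Classical

/- Polysymmetric setting: variables `x_{k,j}` indexed by `(k, j) : ℕ+ × ℕ` with
`deg x_{k,j} = k`.  A type is a multiset of blocks `(k, m) : ℕ+ × ℕ+`. -/

/-- Weighted degree of a monomial. -/
noncomputable def wdeg (e : ℕ+ × ℕ →₀ ℕ) : ℕ := e.sum fun v m => (v.1 : ℕ) * m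

/-- `E_d`: the signed sum of all square-free monomials of weighted degree `d`,
a product of `s` distinct variables carrying sign `(−1)^s`. -/
noncomputable def EE (d : ℕ) : MvPowerSeries (ℕ+ × ℕ) ℚ :=
  fun e => if (∀ v, e v ≤ 1) ∧ wdeg e = d then (-1 : ℚ) ^ e.support.card else 0

/-- Substitution of every variable by its `r`-th power. -/
noncomputable def powSub (r : ℕ) (f : MvPowerSeries (ℕ+ × ℕ) ℚ) :
    MvPowerSeries (ℕ+ × ℕ) ℚ :=
  fun e => if ∀ v, r ∣ e v then f (e.mapRange (· / r) (Nat.zero_div r)) else 0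

/-- `p_n(x_{k*}) = Σ_{j≥1} x_{k,j}^n`. -/
noncomputable def pIn (k : ℕ+) (n : ℕ) : MvPowerSeries (ℕ+ × ℕ) ℚ :=
  fun e => if ∃ j, e = Finsupp.single (k, j) n then 1 else 0

/-- The weight of a type. -/
noncomputable def wtT (τ : Multiset (ℕ+ × ℕ+)) : ℕ :=
  (τ.map fun b => (b.1 : ℕ) * (b.2 : ℕ)).sum

/-- `τ|_k`: the partition formed by the multiplicities of the degree-`k` blocks of `τ`. -/
noncomputable def restrict (τ : Multiset (ℕ+ × ℕ+)) (k : ℕ+) : Multiset ℕ :=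
  (τ.filter fun b => b.1 = k).map fun b => (b.2 : ℕ)

/-- `z_λ = Π_i i^{m_i(λ)} m_i(λ)!`. -/
noncomputable def zMult (lam : Multiset ℕ) : ℚ :=
  ∏ i ∈ lam.toFinset, (i : ℚ) ^ lam.count i * (Nat.factorial (lam.count i) : ℚ)

/-- `z^⊗_τ = Π_{k≥1} z_{τ|_k}`. -/
noncomputable def zT (τ : Multiset (ℕ+ × ℕ+)) : ℚ :=
  ∏ᶠ k : ℕ+, zMult (restrict τ k)

/-- `p^⊗_{τ^r}`: the pure tensor power sum of the type `τ^r` obtained from `τ`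
by scaling every block multiplicity by `r`. -/
noncomputable def pTr (τ : Multiset (ℕ+ × ℕ+)) (r : ℕ) : MvPowerSeries (ℕ+ × ℕ) ℚ :=
  ∏ᶠ k : ℕ+, ((restrict τ k).map fun m => pIn k (r * m)).prod

/-!
Both sides satisfy the Newton-type recursion
`d • F_d = -∑_{k n ≤ d} k • p_{r n}(x_{k*}) * F_{d - k n}`, `F_0 = 1`.
For `r = 1` and `F = E` this is the coefficientwise form of
`x_v ∂_v log ∏_w (1 - x_w) = -∑_{n ≥ 1} x_v ^ n`, summed over `v` with weights `deg x_v`;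
the ring homomorphism `x ↦ x ^ r`, which sends `p_n(x_{k*})` to `p_{r n}(x_{k*})`, then gives
the recursion for `E_{d^r}`.
For the power-sum side, split `d = wt τ` over the blocks of `τ` and delete one block `k^n`:
`z^⊗_τ` changes exactly by the factor `n · mult_τ(k^n)`, which cancels against the weight.
-/

open Finsupp

lemma wdeg_add (a b : ℕ+ × ℕ →₀ ℕ) : wdeg (a + b) = wdeg a + wdeg b :=
  sum_add_index' (fun _ => by simp) (fun _ _ _ => by ring)

lemma wdeg_single (v : ℕ+ × ℕ) (n : ℕ) : wdeg (single v n) = v.1 * n :=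
  sum_single_index (by simp)

lemma wdeg_sub_single_add {e : ℕ+ × ℕ →₀ ℕ} {v : ℕ+ × ℕ} {n : ℕ} (h : n ≤ e v) :
    wdeg (e - single v n) + v.1 * n = wdeg e := by
  rw [← wdeg_single, ← wdeg_add, tsub_add_cancel_of_le (single_le_iff.2 h)]

lemma mul_apply_le_wdeg (e : ℕ+ × ℕ →₀ ℕ) (v : ℕ+ × ℕ) : v.1 * e v ≤ wdeg e := by
  have := wdeg_sub_single_add (e := e) (v := v) le_rfl
  omega

lemma wdeg_eq_zero_iff {e : ℕ+ × ℕ →₀ ℕ} : wdeg e = 0 ↔ e = 0 := by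
  refine ⟨fun h => ext fun v => ?_, fun h => by simp [h, wdeg]⟩
  have := mul_apply_le_wdeg e v
  simp_all

/-- The coefficients of `1 - x`. -/
def signFactor : ℕ → ℚ
  | 0 => 1
  | 1 => -1
  | _ + 2 => 0

lemma sum_range_signFactor : ∀ m : ℕ, ∑ j ∈ Finset.range m, signFactor j = -m * signFactor m
  | 0 => by simp
  | 1 => by simp [signFactor]
  | m + 2 => by simp [Finset.sum_range_succ', signFactor]

/-- The coefficients of `∏_v (1 - x_v)`; `EE d` is its part of weighted degree `d`. -/
noncomputable def sqfreeSign (e : ℕ+ × ℕ →₀ ℕ) : ℚ := e.prod fun _ m => signFactor m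

lemma sqfreeSign_eq_prod {e : ℕ+ × ℕ →₀ ℕ} {s : Finset (ℕ+ × ℕ)} (hs : e.support ⊆ s) :
    sqfreeSign e = ∏ w ∈ s, signFactor (e w) :=
  prod_of_support_subset e hs _ fun _ _ => rfl

lemma sqfreeSign_eq_ite (e : ℕ+ × ℕ →₀ ℕ) :
    sqfreeSign e = if ∀ v, e v ≤ 1 then (-1 : ℚ) ^ e.support.card else 0 := by
  rw [sqfreeSign_eq_prod subset_rfl]
  split_ifs with h
  · refine (Finset.prod_congr rfl fun v hv => ?_).trans (Finset.prod_const _)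
    rw [show e v = 1 by have := mem_support_iff.1 hv; have := h v; omega]; rfl
  · obtain ⟨v, hv⟩ := not_forall.1 h
    obtain ⟨m, hm⟩ : ∃ m, e v = m + 2 := ⟨e v - 2, by omega⟩
    refine Finset.prod_eq_zero (i := v) (mem_support_iff.2 (by omega)) ?_
    rw [hm]; rfl

lemma EE_apply (d : ℕ) (e : ℕ+ × ℕ →₀ ℕ) :
    EE d e = if wdeg e = d then sqfreeSign e else 0 := by
  rw [EE, sqfreeSign_eq_ite]
  split_ifs <;> tauto

lemma EE_zero : EE 0 = 1 := by
  ext e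
  rw [MvPowerSeries.coeff_apply, EE_apply, MvPowerSeries.coeff_one]
  by_cases he : e = 0
  · rw [if_pos he, if_pos (wdeg_eq_zero_iff.2 he), he,
      sqfreeSign_eq_prod (Finset.empty_subset _), Finset.prod_empty]
  · rw [if_neg he, if_neg (mt wdeg_eq_zero_iff.1 he)]

/-- The coefficient form of `x_v ∂_v log ∏_w (1 - x_w) = -∑_{n ≥ 1} x_v ^ n`. -/
lemma sum_sqfreeSign_sub_single (e : ℕ+ × ℕ →₀ ℕ) (v : ℕ+ × ℕ) :
    ∑ n ∈ Finset.Icc 1 (e v), sqfreeSign (e - single v n) = -(e v : ℚ) * sqfreeSign e := by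
  by_cases hv : v ∈ e.support
  · set R := ∏ w ∈ e.support.erase v, signFactor (e w)
    have hterm : ∀ n, sqfreeSign (e - single v n) = signFactor (e v - n) * R := by
      intro n
      rw [sqfreeSign_eq_prod (support_tsub.trans subset_rfl), ← Finset.mul_prod_erase _ _ hv]
      congr 1
      · simp
      · refine Finset.prod_congr rfl fun w hw => ?_
        simp [Finset.ne_of_mem_erase hw]
    have hreflect : ∑ n ∈ Finset.Icc 1 (e v), signFactor (e v - n)
        = ∑ j ∈ Finset.range (e v), signFactor j := by
      rw [← Finset.Ico_add_one_right_eq_Icc, Finset.sum_Ico_reflect _ _ le_rfl]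
      simp
    rw [Finset.sum_congr rfl fun n _ => hterm n, ← Finset.sum_mul, hreflect,
      sum_range_signFactor, sqfreeSign_eq_prod subset_rfl, ← Finset.mul_prod_erase _ _ hv,
      mul_assoc]
  · simp [notMem_support_iff.1 hv]

open Finset.HasAntidiagonal in
lemma coeff_pIn_mul (k : ℕ+) {n : ℕ} (hn : n ≠ 0) (g : MvPowerSeries (ℕ+ × ℕ) ℚ)
    (e : ℕ+ × ℕ →₀ ℕ) :
    (pIn k n * g) e = ∑ v ∈ e.support with v.1 = k ∧ n ≤ e v, g (e - single v n) := by
  set S := e.support.filter fun v => v.1 = k ∧ n ≤ e v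
  set φ : ℕ+ × ℕ → (ℕ+ × ℕ →₀ ℕ) × (ℕ+ × ℕ →₀ ℕ) := fun v => (single v n, e - single v n)
  have hφ : ∀ v ∈ S, φ v ∈ antidiagonal e := fun v hv => by
    rw [mem_antidiagonal, add_comm,
      tsub_add_cancel_of_le (single_le_iff.2 (Finset.mem_filter.1 hv).2.2)]
  have hout : ∀ p ∈ antidiagonal e, p ∉ S.image φ →
      MvPowerSeries.coeff p.1 (pIn k n) * MvPowerSeries.coeff p.2 g = 0 := by
    rintro ⟨a, b⟩ hab hp
    rw [mem_antidiagonal] at hab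
    refine mul_eq_zero_of_left (if_neg ?_) _
    rintro ⟨j, rfl⟩
    have hle : n ≤ e (k, j) := by simp [← hab]
    refine hp (Finset.mem_image.2 ⟨(k, j), ?_, ?_⟩)
    · exact Finset.mem_filter.2 ⟨mem_support_iff.2 (by omega), rfl, hle⟩
    · simp [φ, ← hab]
  rw [show (pIn k n * g) e = MvPowerSeries.coeff e (pIn k n * g) from rfl,
    MvPowerSeries.coeff_mul, ← Finset.sum_subset (Finset.image_subset_iff.2 hφ) hout,
    Finset.sum_image fun v _ w _ h => (single_left_inj hn).1 (congrArg Prod.fst h)]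
  refine Finset.sum_congr rfl fun v hv => ?_
  have hvk : v = (k, v.2) := Prod.ext (Finset.mem_filter.1 hv).2.1 rfl
  exact (congrArg (· * _) (if_pos ⟨v.2, by rw [← hvk]⟩)).trans (one_mul _)

lemma finite_setOf_mul_le (d : ℕ) : {b : ℕ+ × ℕ+ | (b.1 : ℕ) * b.2 ≤ d}.Finite := by
  refine ((Set.finite_Iic d).prod (Set.finite_Iic d)).preimage
    (PNat.coe_injective.prodMap PNat.coe_injective).injOn |>.subset fun b hb => ?_
  have h1 := Nat.le_mul_of_pos_right (b.1 : ℕ) b.2.pos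
  have h2 := Nat.le_mul_of_pos_left (b.2 : ℕ) b.1.pos
  simp only [Set.mem_ofPred_eq] at hb
  exact ⟨by simp; omega, by simp; omega⟩

noncomputable def blocksWtLe (d : ℕ) : Finset (ℕ+ × ℕ+) := (finite_setOf_mul_le d).toFinset

lemma mem_blocksWtLe {d : ℕ} {b : ℕ+ × ℕ+} : b ∈ blocksWtLe d ↔ (b.1 : ℕ) * b.2 ≤ d :=
  Set.Finite.mem_toFinset _

lemma sum_blocksWtLe_fst_eq {M : Type*} [AddCommMonoid M] {d : ℕ} {k : ℕ+} {m : ℕ}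
    (h : k * m ≤ d) (f : ℕ → M) :
    ∑ b ∈ blocksWtLe d with b.1 = k ∧ (b.2 : ℕ) ≤ m, f b.2 = ∑ n ∈ Finset.Icc 1 m, f n := by
  refine Finset.sum_nbij' (fun b => b.2) (fun n => (k, n.toPNat')) ?_ ?_ ?_ ?_ fun _ _ => rfl
  · intro b hb
    rw [Finset.mem_filter] at hb
    exact Finset.mem_Icc.2 ⟨b.2.pos, hb.2.2⟩
  · intro n hn
    rw [Finset.mem_Icc] at hn
    have hn' : (n.toPNat' : ℕ) = n := PNat.toPNat'_coe hn.1
    refine Finset.mem_filter.2 ⟨mem_blocksWtLe.2 ?_, rfl, hn'.le.trans hn.2⟩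
    rw [hn']
    exact (Nat.mul_le_mul_left _ hn.2).trans h
  · intro b hb
    exact Prod.ext (Finset.mem_filter.1 hb).2.1.symm (by simp)
  · intro n hn
    exact PNat.toPNat'_coe (Finset.mem_Icc.1 hn).1

lemma EE_sub_single {d : ℕ} {e : ℕ+ × ℕ →₀ ℕ} {v : ℕ+ × ℕ} {n : ℕ} (hn : n ≤ e v)
    (hd : v.1 * n ≤ d) :
    EE (d - v.1 * n) (e - single v n) = if wdeg e = d then sqfreeSign (e - single v n) else 0 := by
  have := wdeg_sub_single_add hn
  rw [EE_apply]
  exact if_congr (by omega) rfl rfl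

lemma sum_blocksWtLe_sqfreeSign (e : ℕ+ × ℕ →₀ ℕ) :
    ∑ b ∈ blocksWtLe (wdeg e), ((b.1 : ℕ) : ℚ) *
        ∑ v ∈ e.support with v.1 = b.1 ∧ b.2 ≤ e v, sqfreeSign (e - single v (b.2 : ℕ))
      = -(wdeg e : ℚ) * sqfreeSign e := by
  simp_rw [Finset.mul_sum]
  rw [Finset.sum_comm' (t' := e.support)
    (s' := fun v => (blocksWtLe (wdeg e)).filter fun b => b.1 = v.1 ∧ (b.2 : ℕ) ≤ e v)
    (fun b v => by simp only [Finset.mem_filter]; grind)]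
  have hinner : ∀ v ∈ e.support,
      ∑ b ∈ blocksWtLe (wdeg e) with b.1 = v.1 ∧ (b.2 : ℕ) ≤ e v,
          ((b.1 : ℕ) : ℚ) * sqfreeSign (e - single v (b.2 : ℕ))
        = ((v.1 : ℕ) : ℚ) * (-(e v : ℚ) * sqfreeSign e) := by
    intro v _
    rw [← sum_sqfreeSign_sub_single, Finset.mul_sum, ← sum_blocksWtLe_fst_eq
      (mul_apply_le_wdeg e v) fun n => ((v.1 : ℕ) : ℚ) * sqfreeSign (e - single v n)]
    exact Finset.sum_congr rfl fun b hb => by rw [(Finset.mem_filter.1 hb).2.1]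
  calc _ = -(∑ v ∈ e.support, ((v.1 : ℕ) : ℚ) * e v) * sqfreeSign e := by
        rw [Finset.sum_congr rfl hinner, neg_mul, Finset.sum_mul, ← Finset.sum_neg_distrib]
        exact Finset.sum_congr rfl fun _ _ => by ring
    _ = _ := by simp [wdeg, Finsupp.sum]

theorem EE_newton (d : ℕ) :
    (d : ℚ) • EE d
      = -∑ b ∈ blocksWtLe d, ((b.1 : ℕ) : ℚ) • (pIn b.1 b.2 * EE (d - b.1 * b.2)) := by
  ext e
  simp only [map_smul, map_neg, map_sum, smul_eq_mul, MvPowerSeries.coeff_apply,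
    coeff_pIn_mul _ (PNat.ne_zero _)]
  have hterm : ∀ b ∈ blocksWtLe d, ∀ v ∈ e.support.filter fun v => v.1 = b.1 ∧ (b.2 : ℕ) ≤ e v,
      EE (d - b.1 * b.2) (e - single v (b.2 : ℕ))
        = if wdeg e = d then sqfreeSign (e - single v (b.2 : ℕ)) else 0 := by
    intro b hb v hv
    obtain ⟨-, hvb, hle⟩ := Finset.mem_filter.1 hv
    have hbd := mem_blocksWtLe.1 hb
    rw [← hvb] at hbd ⊢
    exact EE_sub_single hle hbd
  rw [Finset.sum_congr rfl fun b hb => congrArg _ (Finset.sum_congr rfl (hterm b hb)), EE_apply]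
  by_cases hd : wdeg e = d
  · subst hd
    simp only [if_true, sum_blocksWtLe_sqfreeSign]
    ring
  · simp [hd]

section powSub

variable {r : ℕ}

lemma powSub_apply_nsmul (hr : r ≠ 0) (f : MvPowerSeries (ℕ+ × ℕ) ℚ) (e : ℕ+ × ℕ →₀ ℕ) :
    powSub r f (r • e) = f e := by
  rw [powSub, if_pos fun v => by simp]
  congr 1
  ext v
  simp [Nat.mul_div_cancel_left _ (Nat.pos_of_ne_zero hr)]

lemma exists_eq_nsmul_of_powSub_apply_ne_zero {f : MvPowerSeries (ℕ+ × ℕ) ℚ}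
    {e : ℕ+ × ℕ →₀ ℕ} (h : powSub r f e ≠ 0) : ∃ e', e = r • e' := by
  by_cases hdvd : ∀ v, r ∣ e v
  · exact ⟨e.mapRange (· / r) (Nat.zero_div r), ext fun v => by
      simp [Nat.mul_div_cancel' (hdvd v)]⟩
  · exact absurd (if_neg hdvd) h

lemma eq_powSub (hr : r ≠ 0) {f g : MvPowerSeries (ℕ+ × ℕ) ℚ}
    (hnsmul : ∀ e, g (r • e) = f e) (hsupp : ∀ e, g e ≠ 0 → ∃ e', e = r • e') :
    g = powSub r f := by
  ext e
  simp only [MvPowerSeries.coeff_apply]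
  by_cases he : ∃ e', e = r • e'
  · obtain ⟨e', rfl⟩ := he
    rw [hnsmul, powSub_apply_nsmul hr]
  · rw [not_imp_comm.1 (hsupp e) he,
      not_imp_comm.1 exists_eq_nsmul_of_powSub_apply_ne_zero he]

lemma powSub_add (f g : MvPowerSeries (ℕ+ × ℕ) ℚ) :
    powSub r (f + g) = powSub r f + powSub r g := by
  ext e
  simp only [map_add, MvPowerSeries.coeff_apply, powSub]
  split_ifs
  · exact map_add (MvPowerSeries.coeff _) f g
  · exact (add_zero 0).symm

lemma powSub_smul (c : ℚ) (f : MvPowerSeries (ℕ+ × ℕ) ℚ) :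
    powSub r (c • f) = c • powSub r f := by
  ext e
  simp only [map_smul, MvPowerSeries.coeff_apply, powSub]
  split_ifs
  · exact map_smul (MvPowerSeries.coeff _) c f
  · exact (smul_zero c).symm

lemma powSub_one (hr : r ≠ 0) : powSub r (1 : MvPowerSeries (ℕ+ × ℕ) ℚ) = 1 := by
  refine (eq_powSub hr (fun e => ?_) fun e he => ⟨0, ?_⟩).symm
  · simp only [← MvPowerSeries.coeff_apply, MvPowerSeries.coeff_one]
    exact if_congr (smul_eq_zero_iff_right hr) rfl rfl
  · simpa [← MvPowerSeries.coeff_apply, MvPowerSeries.coeff_one] using he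

open Finset.HasAntidiagonal in
lemma powSub_mul (hr : r ≠ 0) (f g : MvPowerSeries (ℕ+ × ℕ) ℚ) :
    powSub r (f * g) = powSub r f * powSub r g := by
  have hsupp : ∀ p : (ℕ+ × ℕ →₀ ℕ) × (ℕ+ × ℕ →₀ ℕ),
      MvPowerSeries.coeff p.1 (powSub r f) * MvPowerSeries.coeff p.2 (powSub r g) ≠ 0 →
        ∃ a b, p = (r • a, r • b) := by
    rintro ⟨p₁, p₂⟩ hp
    obtain ⟨a, rfl⟩ := exists_eq_nsmul_of_powSub_apply_ne_zero (left_ne_zero_of_mul hp)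
    obtain ⟨b, rfl⟩ := exists_eq_nsmul_of_powSub_apply_ne_zero (right_ne_zero_of_mul hp)
    exact ⟨a, b, rfl⟩
  -- only pairs `(r • a, r • b)` contribute, so the antidiagonal of `r • e` may be replaced
  -- by the image of the antidiagonal of `e`
  refine (eq_powSub hr (fun e => ?_) fun e he => ?_).symm
  · set ψ : (ℕ+ × ℕ →₀ ℕ) × (ℕ+ × ℕ →₀ ℕ) → (ℕ+ × ℕ →₀ ℕ) × (ℕ+ × ℕ →₀ ℕ) :=
      fun p => (r • p.1, r • p.2)
    have hinj : Function.Injective (r • · : (ℕ+ × ℕ →₀ ℕ) → _) :=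
      IsAddTorsionFree.nsmul_right_injective hr
    have hsub : (antidiagonal e).image ψ ⊆ antidiagonal (r • e) := by
      simp_rw [Finset.image_subset_iff, mem_antidiagonal, ψ, ← smul_add]
      exact fun p hp => congrArg _ hp
    have hout : ∀ p ∈ antidiagonal (r • e), p ∉ (antidiagonal e).image ψ →
        MvPowerSeries.coeff p.1 (powSub r f) * MvPowerSeries.coeff p.2 (powSub r g) = 0 := by
      intro p hp hpψ
      by_contra hne
      obtain ⟨a, b, rfl⟩ := hsupp p hne
      rw [mem_antidiagonal, ← smul_add] at hp
      exact hpψ (Finset.mem_image.2 ⟨(a, b), mem_antidiagonal.2 (hinj hp), rfl⟩)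
    rw [← MvPowerSeries.coeff_apply (powSub r f * powSub r g), ← MvPowerSeries.coeff_apply (f * g),
      MvPowerSeries.coeff_mul, MvPowerSeries.coeff_mul, ← Finset.sum_subset hsub hout,
      Finset.sum_image fun p _ q _ h => Prod.ext (hinj (congrArg Prod.fst h))
        (hinj (congrArg Prod.snd h))]
    simp only [ψ, MvPowerSeries.coeff_apply, powSub_apply_nsmul hr]
  · rw [← MvPowerSeries.coeff_apply (powSub r f * powSub r g), MvPowerSeries.coeff_mul] at he
    obtain ⟨p, hp, hne⟩ := Finset.exists_ne_zero_of_sum_ne_zero he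
    obtain ⟨a, b, rfl⟩ := hsupp p hne
    exact ⟨a + b, by rw [smul_add, ← mem_antidiagonal.1 hp]⟩

lemma powSub_pIn (hr : r ≠ 0) (k : ℕ+) (n : ℕ) : powSub r (pIn k n) = pIn k (r * n) := by
  refine (eq_powSub hr (fun e => if_congr ?_ rfl rfl) fun e he => ?_).symm
  · refine exists_congr fun j => ?_
    rw [← smul_eq_mul, ← smul_single]
    exact (IsAddTorsionFree.nsmul_right_injective hr).eq_iff
  · obtain ⟨j, rfl⟩ : ∃ j, e = single (k, j) (r * n) := by
      by_contra h
      exact he (if_neg h)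
    exact ⟨single (k, j) n, by rw [smul_single, smul_eq_mul]⟩

noncomputable def powSubAlgHom (hr : r ≠ 0) :
    MvPowerSeries (ℕ+ × ℕ) ℚ →ₐ[ℚ] MvPowerSeries (ℕ+ × ℕ) ℚ :=
  AlgHom.ofLinearMap ⟨⟨powSub r, powSub_add⟩, powSub_smul⟩ (powSub_one hr) (powSub_mul hr)

lemma powSubAlgHom_apply (hr : r ≠ 0) (f : MvPowerSeries (ℕ+ × ℕ) ℚ) :
    powSubAlgHom hr f = powSub r f := rfl

end powSub

lemma restrict_cons (b : ℕ+ × ℕ+) (τ : Multiset (ℕ+ × ℕ+)) (k : ℕ+) :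
    restrict (b ::ₘ τ) k = if b.1 = k then (b.2 : ℕ) ::ₘ restrict τ k else restrict τ k := by
  unfold restrict
  rw [Multiset.filter_cons]
  split_ifs <;> simp

lemma restrict_eq_zero {τ : Multiset (ℕ+ × ℕ+)} {k : ℕ+} (hk : k ∉ τ.map Prod.fst) :
    restrict τ k = 0 :=
  Multiset.map_eq_zero.2 <| Multiset.filter_eq_nil.2 fun b hb hbk =>
    hk (Multiset.mem_map.2 ⟨b, hb, hbk⟩)

lemma count_restrict (τ : Multiset (ℕ+ × ℕ+)) (b : ℕ+ × ℕ+) :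
    (restrict τ b.1).count (b.2 : ℕ) = τ.count b := by
  rw [restrict, Multiset.count_map, Multiset.filter_filter, Multiset.count_eq_card_filter_eq]
  congr 1
  refine Multiset.filter_congr fun a _ => ?_
  rw [Prod.ext_iff, PNat.coe_inj]
  tauto

lemma finprod_restrict_cons {M : Type*} [CommMonoid M] {F : ℕ+ → Multiset ℕ → M}
    {G : ℕ+ → ℕ → Multiset ℕ → M} (hF₀ : ∀ k, F k 0 = 1)
    (hF : ∀ k m lam, F k (m ::ₘ lam) = G k m lam * F k lam) (b : ℕ+ × ℕ+)
    (τ : Multiset (ℕ+ × ℕ+)) :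
    ∏ᶠ k, F k (restrict (b ::ₘ τ) k) = G b.1 b.2 (restrict τ b.1) * ∏ᶠ k, F k (restrict τ k) := by
  have hfin : (Function.mulSupport fun k => F k (restrict τ k)).Finite :=
    (τ.map Prod.fst).toFinset.finite_toSet.subset fun k hk => by
      by_contra h
      exact hk (show F k (restrict τ k) = 1 by rw [restrict_eq_zero (by simpa using h), hF₀])
  have hcons : ∀ k, F k (restrict (b ::ₘ τ) k)
      = (if k = b.1 then G b.1 b.2 (restrict τ b.1) else 1) * F k (restrict τ k) := by
    intro k
    rw [restrict_cons]
    split_ifs with h₁ h₂ h₂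
    · subst h₁; exact hF _ _ _
    · exact absurd h₁.symm h₂
    · exact absurd h₂.symm h₁
    · exact (one_mul _).symm
  have hite : (Function.mulSupport fun k => if k = b.1 then G b.1 b.2 (restrict τ b.1)
      else 1).Finite :=
    (Set.finite_singleton b.1).subset fun k hk => by_contra fun h => hk (if_neg h)
  rw [finprod_congr hcons, finprod_mul_distrib hite hfin,
    finprod_eq_single _ b.1 fun k hk => if_neg hk, if_pos rfl]

lemma zMult_eq_prod {lam : Multiset ℕ} {s : Finset ℕ} (hs : lam.toFinset ⊆ s) :
    zMult lam = ∏ i ∈ s, (i : ℚ) ^ lam.count i * (lam.count i).factorial :=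
  Finset.prod_subset hs fun i _ hi => by
    simp [Multiset.count_eq_zero.2 (mt Multiset.mem_toFinset.2 hi)]

lemma zMult_cons (m : ℕ) (lam : Multiset ℕ) :
    zMult (m ::ₘ lam) = m * (lam.count m + 1) * zMult lam := by
  have hm : m ∈ (m ::ₘ lam).toFinset := by simp
  rw [zMult_eq_prod subset_rfl, zMult_eq_prod (s := (m ::ₘ lam).toFinset) (by simp),
    ← Finset.mul_prod_erase _ _ hm, ← Finset.mul_prod_erase _ _ hm,
    Finset.prod_congr rfl fun i hi => by rw [Multiset.count_cons_of_ne (Finset.ne_of_mem_erase hi)],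
    Multiset.count_cons_self, pow_succ, Nat.factorial_succ]
  push_cast
  ring

lemma zT_zero : zT 0 = 1 := finprod_one

lemma zT_cons (b : ℕ+ × ℕ+) (τ : Multiset (ℕ+ × ℕ+)) :
    zT (b ::ₘ τ) = (b.2 : ℕ) * (τ.count b + 1) * zT τ := by
  rw [zT, finprod_restrict_cons (fun _ => by simp [zMult]) (fun _ m lam => zMult_cons m lam),
    count_restrict]
  rfl

lemma zT_ne_zero (τ : Multiset (ℕ+ × ℕ+)) : zT τ ≠ 0 := by
  induction τ using Multiset.induction with
  | empty => simp [zT_zero]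
  | cons b τ ih =>
    rw [zT_cons]
    exact mul_ne_zero (mul_ne_zero (by simp) (by positivity)) ih

lemma pTr_zero (r : ℕ) : pTr 0 r = 1 := finprod_one

lemma pTr_cons (b : ℕ+ × ℕ+) (τ : Multiset (ℕ+ × ℕ+)) (r : ℕ) :
    pTr (b ::ₘ τ) r = pIn b.1 (r * b.2) * pTr τ r :=
  finprod_restrict_cons (F := fun k lam => (lam.map fun m => pIn k (r * m)).prod)
    (G := fun k m _ => pIn k (r * m))
    (fun _ => Multiset.prod_zero) (fun _ _ _ => by rw [Multiset.map_cons, Multiset.prod_cons]) b τ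

lemma wtT_cons (b : ℕ+ × ℕ+) (τ : Multiset (ℕ+ × ℕ+)) :
    wtT (b ::ₘ τ) = b.1 * b.2 + wtT τ := by
  rw [wtT, Multiset.map_cons, Multiset.sum_cons]
  rfl

lemma mul_le_wtT_of_mem {b : ℕ+ × ℕ+} {τ : Multiset (ℕ+ × ℕ+)} (hb : b ∈ τ) :
    b.1 * b.2 ≤ wtT τ := by
  obtain ⟨τ, rfl⟩ := Multiset.exists_cons_of_mem hb
  rw [wtT_cons]
  exact Nat.le_add_right _ _

lemma card_le_wtT (τ : Multiset (ℕ+ × ℕ+)) : Multiset.card τ ≤ wtT τ := by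
  induction τ using Multiset.induction with
  | empty => exact le_rfl
  | cons b τ ih =>
    have := Nat.mul_pos b.1.pos b.2.pos
    rw [wtT_cons, Multiset.card_cons]
    omega

lemma finite_setOf_wtT_eq (d : ℕ) : {τ | wtT τ = d}.Finite := by
  refine (d • (blocksWtLe d).val).powerset.toFinset.finite_toSet.subset fun τ hτ => ?_
  simp only [Set.mem_ofPred_eq] at hτ
  simp only [Multiset.mem_toFinset, Multiset.mem_powerset, Finset.mem_coe]
  refine Multiset.le_iff_count.2 fun b => ?_
  by_cases hb : b ∈ τ
  · have hbd : b ∈ blocksWtLe d := mem_blocksWtLe.2 (hτ ▸ mul_le_wtT_of_mem hb)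
    rw [Multiset.count_nsmul, Multiset.count_eq_one_of_mem (blocksWtLe d).nodup hbd, mul_one, ← hτ]
    exact (Multiset.count_le_card b τ).trans (card_le_wtT τ)
  · simp [Multiset.count_eq_zero.2 hb]

noncomputable def typesOfWt (d : ℕ) : Finset (Multiset (ℕ+ × ℕ+)) :=
  (finite_setOf_wtT_eq d).toFinset

lemma mem_typesOfWt {d : ℕ} {τ : Multiset (ℕ+ × ℕ+)} : τ ∈ typesOfWt d ↔ wtT τ = d :=
  Set.Finite.mem_toFinset _

lemma typesOfWt_zero : typesOfWt 0 = {0} := by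
  ext τ
  rw [mem_typesOfWt, Finset.mem_singleton]
  refine ⟨fun h => Multiset.card_eq_zero.1 (Nat.le_zero.1 (h ▸ card_le_wtT τ)), ?_⟩
  rintro rfl
  rfl

lemma sum_typesOfWt_filter_mem {M : Type*} [AddCommMonoid M] {d : ℕ} {b : ℕ+ × ℕ+}
    (hb : b.1 * b.2 ≤ d) (f : Multiset (ℕ+ × ℕ+) → M) :
    ∑ τ ∈ typesOfWt d with b ∈ τ, f τ = ∑ τ ∈ typesOfWt (d - b.1 * b.2), f (b ::ₘ τ) := by
  refine Finset.sum_nbij' (fun τ => τ.erase b) (b ::ₘ ·) (fun τ hτ => ?_) (fun τ hτ => ?_)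
    (fun τ hτ => Multiset.cons_erase (Finset.mem_filter.1 hτ).2)
    (fun τ _ => Multiset.erase_cons_head b τ)
    (fun τ hτ => by rw [Multiset.cons_erase (Finset.mem_filter.1 hτ).2])
  · obtain ⟨hτd, hbτ⟩ := Finset.mem_filter.1 hτ
    have := wtT_cons b (τ.erase b)
    rw [Multiset.cons_erase hbτ, mem_typesOfWt.1 hτd] at this
    exact mem_typesOfWt.2 (by omega)
  · have := wtT_cons b τ
    rw [mem_typesOfWt.1 hτ] at this
    exact Finset.mem_filter.2 ⟨mem_typesOfWt.2 (by omega), Multiset.mem_cons_self b τ⟩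

noncomputable def pTensorTerm (r : ℕ) (τ : Multiset (ℕ+ × ℕ+)) : MvPowerSeries (ℕ+ × ℕ) ℚ :=
  ((-1 : ℚ) ^ Multiset.card τ * (zT τ)⁻¹) • pTr τ r

noncomputable def pTensorSum (r d : ℕ) : MvPowerSeries (ℕ+ × ℕ) ℚ :=
  ∑ τ ∈ typesOfWt d, pTensorTerm r τ

lemma pTensorTerm_cons (r : ℕ) (b : ℕ+ × ℕ+) (τ : Multiset (ℕ+ × ℕ+)) :
    ((τ.count b + 1) * (b.1 * b.2 : ℕ) : ℚ) • pTensorTerm r (b ::ₘ τ)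
      = -((b.1 : ℕ) : ℚ) • (pIn b.1 (r * b.2) * pTensorTerm r τ) := by
  rw [pTensorTerm, pTensorTerm, pTr_cons, zT_cons, Multiset.card_cons, mul_smul_comm, smul_smul,
    smul_smul]
  congr 1
  have := zT_ne_zero τ
  field_simp
  push_cast
  ring

theorem pTensorSum_newton (r d : ℕ) :
    (d : ℚ) • pTensorSum r d
      = -∑ b ∈ blocksWtLe d,
          ((b.1 : ℕ) : ℚ) • (pIn b.1 (r * b.2) * pTensorSum r (d - b.1 * b.2)) := by
  have hwt : ∀ τ ∈ typesOfWt d, (d : ℚ) • pTensorTerm r τ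
      = ∑ b ∈ τ.toFinset, ((τ.count b * (b.1 * b.2 : ℕ) : ℕ) : ℚ) • pTensorTerm r τ := by
    intro τ hτ
    rw [← Finset.sum_smul, ← mem_typesOfWt.1 hτ, wtT, Finset.sum_multiset_map_count]
    simp
  -- sum over pairs (type `τ`, block `b ∈ τ`), then delete `b` from `τ`
  rw [pTensorSum, Finset.smul_sum, Finset.sum_congr rfl hwt,
    Finset.sum_comm' (t' := blocksWtLe d) (s' := fun b => (typesOfWt d).filter (b ∈ ·))
      fun τ b => ?_]
  · simp only [pTensorSum, Finset.mul_sum, Finset.smul_sum, ← Finset.sum_neg_distrib]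
    refine Finset.sum_congr rfl fun b hb => ?_
    rw [sum_typesOfWt_filter_mem (mem_blocksWtLe.1 hb)]
    refine Finset.sum_congr rfl fun τ _ => ?_
    rw [Multiset.count_cons_self, ← neg_smul, ← pTensorTerm_cons]
    push_cast
    rfl
  · simp only [Finset.mem_filter, Multiset.mem_toFinset, mem_typesOfWt, mem_blocksWtLe]
    exact ⟨fun ⟨hτ, hb⟩ => ⟨⟨hτ, hb⟩, hτ ▸ mul_le_wtT_of_mem hb⟩, fun h => h.1⟩

lemma pTensorSum_zero (r : ℕ) : pTensorSum r 0 = 1 := by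
  rw [pTensorSum, typesOfWt_zero, Finset.sum_singleton, pTensorTerm, zT_zero, pTr_zero]
  simp

theorem powSub_EE {r : ℕ} (hr : r ≠ 0) (d : ℕ) : powSub r (EE d) = pTensorSum r d := by
  refine Nat.strong_induction_on d fun d ih => ?_
  rcases Nat.eq_zero_or_pos d with rfl | hd
  · rw [EE_zero, powSub_one hr, pTensorSum_zero]
  refine smul_right_injective _ (Nat.cast_ne_zero.2 hd.ne' : (d : ℚ) ≠ 0) ?_
  calc (d : ℚ) • powSub r (EE d) = powSub r ((d : ℚ) • EE d) := (powSub_smul _ _).symm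
    _ = -∑ b ∈ blocksWtLe d,
          ((b.1 : ℕ) : ℚ) • (pIn b.1 (r * b.2) * powSub r (EE (d - b.1 * b.2))) := by
      rw [EE_newton, ← powSubAlgHom_apply hr]
      simp only [map_neg, map_sum, map_smul, map_mul, powSubAlgHom_apply, powSub_pIn hr]
    _ = -∑ b ∈ blocksWtLe d,
          ((b.1 : ℕ) : ℚ) • (pIn b.1 (r * b.2) * pTensorSum r (d - b.1 * b.2)) := by
      refine congrArg _ (Finset.sum_congr rfl fun b _ => ?_)
      rw [ih _ (Nat.sub_lt hd (Nat.mul_pos b.1.pos b.2.pos))]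
    _ = (d : ℚ) • pTensorSum r d := (pTensorSum_newton r d).symm

theorem E_block_in_pTensor_general (d r : ℕ) (hr : 0 < r) :
    powSub r (EE d)
      = ∑ᶠ τ : {τ : Multiset (ℕ+ × ℕ+) // wtT τ = d},
          ((-1 : ℚ) ^ (τ.1.card) * (zT τ.1)⁻¹) • pTr τ.1 r := by
  change _ = ∑ᶠ τ : {τ // wtT τ = d}, pTensorTerm r τ.1
  rw [powSub_EE hr.ne', pTensorSum, finsum_subtype_eq_finsum_cond (fun τ => wtT τ = d),
    finsum_cond_eq_sum_of_cond_iff _ fun _ => mem_typesOfWt.symm]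

/-- For positive integers `d, r`:
`E_{d^r} = Σ_{τ ⊩ d} (−1)^{ℓ(τ)} p^⊗_{τ^r} / z^⊗_τ`, summed over all types `τ` of
weight `d`, where `ℓ(τ)` is the number of blocks of `τ` counted with multiplicity. -/
theorem E_block_in_pTensor (d r : ℕ) (hd : 0 < d) (hr : 0 < r) :
    powSub r (EE d)
      = ∑ᶠ τ : {τ : Multiset (ℕ+ × ℕ+) // wtT τ = d},
          ((-1 : ℚ) ^ (τ.1.card) * (zT τ.1)⁻¹) • pTr τ.1 r :=
  E_block_in_pTensor_general d r hr
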